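/- arXiv:2311.16582 — 2 statements merged into one kernel-verified Lean document; each statement's English description precedes it below -/
import Mathlib

section
/- Let N ≥ 1 and let p_1,…,p_N, x_1,…,x_N : ℝ → ℝ be differentiable functions with p_i(t) > 0 and x_1(t) > x_2(t) > ⋯ > x_N(t) for all t, satisfying the Camassa–Holm peakon system: dp_i/dt = −p_i Σ_{j=1}^{i−1} p_j e^{x_i−x_j} + p_i Σ_{j=i+1}^{N} p_j e^{x_j−x_i} and dx_i/dt = Σ_{j=1}^{i−1} p_j e^{x_i−x_j} + p_i + Σ_{j=i+1}^{N} p_j e^{x_j−x_i}. Let 𝒜(t) be the N×N matrix with entries 𝒜(t)_{ij} := √(p_i(t)p_j(t)) e^{(x_{max(i,j)}(t) − x_{min(i,j)}(t))/2}, and assume 𝒜(t) is invertible for every t. Then A(t) := 𝒜(t)^{−1} is differentiable entrywise and satisfies dA(t)/dt = A(t)Π(A(t)^{−1}) − Π(A(t)^{−1})A(t). -/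
/-! On and above the diagonal `𝒜ᵢⱼ = √(pᵢ pⱼ) e^{(xⱼ - xᵢ)/2}`, and `𝒜` is symmetric. Hence for
`i ≤ j` the products `𝒜ᵢₖ 𝒜ₖⱼ` with `k < i` or `k > j` are `𝒜ᵢⱼ` times the interaction terms
`pₖ e^{xᵢ - xₖ}`, `pₖ e^{xₖ - xⱼ}` of the peakon system, while the terms with `i < k < j` drop out of
`𝒜 Π(𝒜) - Π(𝒜) 𝒜`. The peakon equations say that the logarithmic derivative of `𝒜ᵢⱼ` is exactly
the resulting factor, so `𝒜' = 𝒜 Π(𝒜) - Π(𝒜) 𝒜`, and then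
`A' = -A 𝒜' A = A Π(𝒜) - Π(𝒜) A`. -/

open Finset

/-- Strictly lower triangular part of a matrix. -/
def lowerPart {N : ℕ} (M : Matrix (Fin N) (Fin N) ℝ) : Matrix (Fin N) (Fin N) ℝ :=
  Matrix.of fun i j => if j < i then M i j else 0

/-- Strictly upper triangular part of a matrix. -/
def upperPart {N : ℕ} (M : Matrix (Fin N) (Fin N) ℝ) : Matrix (Fin N) (Fin N) ℝ :=
  Matrix.of fun i j => if i < j then M i j else 0

/-- Π(M) := (1/2) M_< − (1/2) M_>. -/
noncomputable def PiMap {N : ℕ} (M : Matrix (Fin N) (Fin N) ℝ) : Matrix (Fin N) (Fin N) ℝ :=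
  (1 / 2 : ℝ) • lowerPart M - (1 / 2 : ℝ) • upperPart M

/-- The semiseparable peakon matrix 𝒜(t). -/
noncomputable def calA {N : ℕ} (p x : Fin N → ℝ → ℝ) (t : ℝ) : Matrix (Fin N) (Fin N) ℝ :=
  Matrix.of fun i j =>
    Real.sqrt (p i t * p j t) * Real.exp ((x (max i j) t - x (min i j) t) / 2)

/-- A(t) := 𝒜(t)⁻¹. -/
noncomputable def triA {N : ℕ} (p x : Fin N → ℝ → ℝ) (t : ℝ) : Matrix (Fin N) (Fin N) ℝ :=
  (calA p x t)⁻¹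

section MatrixCalculus

open scoped Matrix.Norms.Operator

-- The operator norm induces the product topology, so derivatives are entrywise derivatives, and
-- it makes matrices a normed algebra, where `Ring.inverse` is differentiable at units.

attribute [local instance] Matrix.linftyOpNormedRing Matrix.linftyOpNormedAlgebra

variable {n : Type*} [Fintype n] [DecidableEq n]

theorem hasDerivAt_matrix_inv_apply {M : ℝ → Matrix n n ℝ} {M' : Matrix n n ℝ} {t : ℝ}
    (hM : ∀ i j, HasDerivAt (fun s => M s i j) (M' i j) t) (hdet : IsUnit (M t).det) (i j : n) :
    HasDerivAt (fun s => (M s)⁻¹ i j) ((-((M t)⁻¹ * M' * (M t)⁻¹)) i j) t := by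
  have hMt : HasDerivAt M M' t := hasDerivAt_pi.2 fun i => hasDerivAt_pi.2 (hM i)
  obtain ⟨u, hu⟩ := (Matrix.isUnit_iff_isUnit_det _).2 hdet
  have hinv := hasFDerivAt_ringInverse (𝕜 := ℝ) u
  rw [hu] at hinv
  have hcomp := hinv.comp_hasDerivAt t hMt
  simp only [neg_apply, ContinuousLinearMap.mulLeftRight_apply, Matrix.coe_units_inv, hu,
    Function.comp_def, ← Matrix.nonsing_inv_eq_ringInverse] at hcomp
  exact hasDerivAt_pi.1 (hasDerivAt_pi.1 hcomp i) j

end MatrixCalculus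

theorem Matrix.neg_nonsing_inv_mul_commutator_mul_nonsing_inv {n R : Type*} [Fintype n]
    [DecidableEq n] [CommRing R] {M : Matrix n n R} (hM : IsUnit M.det) (P : Matrix n n R) :
    -(M⁻¹ * (M * P - P * M) * M⁻¹) = M⁻¹ * P - P * M⁻¹ := by
  simp only [mul_sub, sub_mul, ← mul_assoc, Matrix.nonsing_inv_mul _ hM, one_mul]
  simp only [mul_assoc, Matrix.mul_nonsing_inv _ hM, mul_one, neg_sub]

theorem Real.sqrt_mul_mul_sqrt_mul {a b c : ℝ} (ha : 0 ≤ a) (hb : 0 ≤ b) :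
    √(a * b) * √(b * c) = b * √(a * c) := by
  rw [← Real.sqrt_mul (mul_nonneg ha hb), show a * b * (b * c) = b ^ 2 * (a * c) by ring,
    Real.sqrt_mul (sq_nonneg b), Real.sqrt_sq hb]

theorem HasDerivAt.sqrt_mul_exp {f g : ℝ → ℝ} {f' g' t : ℝ} (hf : HasDerivAt f f' t)
    (hg : HasDerivAt g g' t) (hpos : 0 < f t) :
    HasDerivAt (fun s => √(f s) * Real.exp (g s))
      (√(f t) * Real.exp (g t) * (f' / (2 * f t) + g')) t := by
  refine ((hf.sqrt hpos.ne').fun_mul hg.exp).congr_deriv ?_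
  have hsq : √(f t) * √(f t) = f t := Real.mul_self_sqrt hpos.le
  have hsqrt : √(f t) ≠ 0 := (Real.sqrt_pos.2 hpos).ne'
  field_simp
  linear_combination (-f') * hsq

section PiMap

open scoped Matrix

variable {N : ℕ}

noncomputable def piCoeff (a b : Fin N) : ℝ :=
  (if b < a then 1 / 2 else 0) - (if a < b then 1 / 2 else 0)

theorem PiMap_apply (M : Matrix (Fin N) (Fin N) ℝ) (a b : Fin N) :
    PiMap M a b = piCoeff a b * M a b := by
  simp only [PiMap, lowerPart, upperPart, piCoeff, Matrix.sub_apply, Matrix.smul_apply,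
    Matrix.of_apply, smul_eq_mul, mul_ite, mul_zero, ite_mul, zero_mul, sub_mul]

theorem piCoeff_sub_piCoeff {i j : Fin N} (hij : i ≤ j) (k : Fin N) :
    piCoeff k j - piCoeff i k = (if j < k then 1 else 0) - (if k < i then 1 else 0)
      + ((if k = j then 1 else 0) - (if k = i then 1 else 0)) / 2 := by
  unfold piCoeff
  split_ifs <;> first | order | norm_num

theorem commutator_PiMap_apply (M : Matrix (Fin N) (Fin N) ℝ) (i j : Fin N) :
    (M * PiMap M - PiMap M * M) i j = ∑ k, M i k * M k j * (piCoeff k j - piCoeff i k) := by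
  simp only [Matrix.sub_apply, Matrix.mul_apply, ← Finset.sum_sub_distrib, PiMap_apply]
  exact Finset.sum_congr rfl fun k _ => by ring

theorem transpose_PiMap (M : Matrix (Fin N) (Fin N) ℝ) : (PiMap M)ᵀ = -PiMap Mᵀ := by
  ext a b
  simp only [Matrix.transpose_apply, Matrix.neg_apply, PiMap_apply, piCoeff]
  split_ifs <;> first | order | norm_num

theorem isSymm_commutator_PiMap {M : Matrix (Fin N) (Fin N) ℝ} (hM : M.IsSymm) :
    (M * PiMap M - PiMap M * M).IsSymm := by
  simp only [Matrix.IsSymm, Matrix.transpose_sub, Matrix.transpose_mul, transpose_PiMap, hM.eq,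
    Matrix.neg_mul, Matrix.mul_neg, sub_neg_eq_add, neg_add_eq_sub]

end PiMap

section Peakon

variable {N : ℕ} (p x : Fin N → ℝ → ℝ)

noncomputable def leftSum (i : Fin N) (t : ℝ) : ℝ :=
  ∑ j ∈ Finset.univ.filter (fun j => j < i), p j t * Real.exp (x i t - x j t)

noncomputable def rightSum (i : Fin N) (t : ℝ) : ℝ :=
  ∑ j ∈ Finset.univ.filter (fun j => i < j), p j t * Real.exp (x j t - x i t)

variable {p x} {t : ℝ}

theorem calA_isSymm : (calA p x t).IsSymm := by
  ext i j
  simp only [Matrix.transpose_apply, calA, Matrix.of_apply, mul_comm (p j t), max_comm, min_comm]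

theorem calA_apply_of_le {i j : Fin N} (hij : i ≤ j) :
    calA p x t i j = √(p i t * p j t) * Real.exp ((x j t - x i t) / 2) := by
  simp only [calA, Matrix.of_apply, max_eq_right hij, min_eq_left hij]

theorem calA_mul_calA_of_le_left {i j k : Fin N} (hki : k ≤ i) (hij : i ≤ j)
    (hpi : 0 ≤ p i t) (hpk : 0 ≤ p k t) :
    calA p x t i k * calA p x t k j = calA p x t i j * (p k t * Real.exp (x i t - x k t)) := by
  rw [calA_isSymm.apply k i, calA_apply_of_le hki, calA_apply_of_le (hki.trans hij),
    calA_apply_of_le hij, mul_comm (p k t) (p i t)]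
  have hsqrt := Real.sqrt_mul_mul_sqrt_mul (c := p j t) hpi hpk
  have hexp : Real.exp ((x i t - x k t) / 2) * Real.exp ((x j t - x k t) / 2)
      = Real.exp ((x j t - x i t) / 2) * Real.exp (x i t - x k t) := by
    rw [← Real.exp_add, ← Real.exp_add]; ring_nf
  linear_combination (Real.exp ((x i t - x k t) / 2) * Real.exp ((x j t - x k t) / 2)) * hsqrt
    + (p k t * √(p i t * p j t)) * hexp

theorem calA_mul_calA_of_right_le {i j k : Fin N} (hij : i ≤ j) (hjk : j ≤ k)
    (hpi : 0 ≤ p i t) (hpk : 0 ≤ p k t) :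
    calA p x t i k * calA p x t k j = calA p x t i j * (p k t * Real.exp (x k t - x j t)) := by
  rw [calA_isSymm.apply j k, calA_apply_of_le (hij.trans hjk), calA_apply_of_le hjk,
    calA_apply_of_le hij, mul_comm (p j t) (p k t)]
  have hsqrt := Real.sqrt_mul_mul_sqrt_mul (c := p j t) hpi hpk
  have hexp : Real.exp ((x k t - x i t) / 2) * Real.exp ((x k t - x j t) / 2)
      = Real.exp ((x j t - x i t) / 2) * Real.exp (x k t - x j t) := by
    rw [← Real.exp_add, ← Real.exp_add]; ring_nf
  linear_combination (Real.exp ((x k t - x i t) / 2) * Real.exp ((x k t - x j t) / 2)) * hsqrt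
    + (p k t * √(p i t * p j t)) * hexp

theorem calA_apply_self (i : Fin N) (hpi : 0 ≤ p i t) : calA p x t i i = p i t := by
  rw [calA_apply_of_le le_rfl, Real.sqrt_mul_self hpi, sub_self, zero_div, Real.exp_zero, mul_one]

theorem commutator_calA_apply_of_le (hp : ∀ k, 0 ≤ p k t) {i j : Fin N} (hij : i ≤ j) :
    (calA p x t * PiMap (calA p x t) - PiMap (calA p x t) * calA p x t) i j
      = calA p x t i j * (rightSum p x j t - leftSum p x i t + (p j t - p i t) / 2) := by
  have hsplit : (calA p x t * PiMap (calA p x t) - PiMap (calA p x t) * calA p x t) i j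
      = ∑ k ∈ Finset.univ.filter (fun k => j < k), calA p x t i k * calA p x t k j
        - ∑ k ∈ Finset.univ.filter (fun k => k < i), calA p x t i k * calA p x t k j
        + (calA p x t i j * calA p x t j j - calA p x t i i * calA p x t i j) / 2 := by
    simp only [commutator_PiMap_apply, piCoeff_sub_piCoeff hij, mul_add, mul_sub, ← mul_div_assoc,
      mul_ite, mul_one, mul_zero, Finset.sum_add_distrib, Finset.sum_sub_distrib, ← Finset.sum_div,
      Finset.sum_ite_eq', Finset.mem_univ, if_true, Finset.sum_filter]
  rw [hsplit, calA_apply_self j (hp j), calA_apply_self i (hp i),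
    Finset.sum_congr rfl fun k hk => calA_mul_calA_of_right_le hij
      (Finset.mem_filter.1 hk).2.le (hp i) (hp k),
    Finset.sum_congr rfl fun k hk => calA_mul_calA_of_le_left (Finset.mem_filter.1 hk).2.le hij
      (hp i) (hp k),
    ← Finset.mul_sum, ← Finset.mul_sum]
  unfold leftSum rightSum
  ring

variable {p' x' : Fin N → ℝ}

theorem hasDerivAt_calA_apply_of_le (hp : ∀ k, HasDerivAt (p k) (p' k) t)
    (hx : ∀ k, HasDerivAt (x k) (x' k) t) (hpos : ∀ k, 0 < p k t) {i j : Fin N} (hij : i ≤ j) :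
    HasDerivAt (fun s => calA p x s i j) (calA p x t i j *
      ((p' i * p j t + p i t * p' j) / (2 * (p i t * p j t)) + (x' j - x' i) / 2)) t := by
  have h := ((hp i).fun_mul (hp j)).sqrt_mul_exp (((hx j).fun_sub (hx i)).div_const 2)
    (mul_pos (hpos i) (hpos j))
  rw [← calA_apply_of_le hij] at h
  exact h.congr_of_eventuallyEq (Filter.Eventually.of_forall fun s => calA_apply_of_le hij)

theorem peakon_logDeriv (hpos : ∀ k, 0 < p k t)
    (hp' : ∀ k, p' k = -p k t * leftSum p x k t + p k t * rightSum p x k t)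
    (hx' : ∀ k, x' k = leftSum p x k t + p k t + rightSum p x k t) (i j : Fin N) :
    (p' i * p j t + p i t * p' j) / (2 * (p i t * p j t)) + (x' j - x' i) / 2
      = rightSum p x j t - leftSum p x i t + (p j t - p i t) / 2 := by
  rw [hp', hp', hx', hx']
  field_simp [(hpos i).ne', (hpos j).ne']
  ring

theorem hasDerivAt_calA_apply (hp : ∀ k, HasDerivAt (p k) (p' k) t)
    (hx : ∀ k, HasDerivAt (x k) (x' k) t) (hpos : ∀ k, 0 < p k t)
    (hp' : ∀ k, p' k = -p k t * leftSum p x k t + p k t * rightSum p x k t)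
    (hx' : ∀ k, x' k = leftSum p x k t + p k t + rightSum p x k t) (i j : Fin N) :
    HasDerivAt (fun s => calA p x s i j)
      ((calA p x t * PiMap (calA p x t) - PiMap (calA p x t) * calA p x t) i j) t := by
  have hle : ∀ {i j : Fin N}, i ≤ j → HasDerivAt (fun s => calA p x s i j)
      ((calA p x t * PiMap (calA p x t) - PiMap (calA p x t) * calA p x t) i j) t := fun hij => by
    rw [commutator_calA_apply_of_le (fun k => (hpos k).le) hij,
      ← peakon_logDeriv hpos hp' hx']
    exact hasDerivAt_calA_apply_of_le hp hx hpos hij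
  rcases le_total i j with hij | hji
  · exact hle hij
  · rw [← (isSymm_commutator_PiMap calA_isSymm).apply i j]
    simpa only [calA_isSymm.apply j i] using hle hji

theorem hasDerivAt_triA_apply (hp : ∀ k, HasDerivAt (p k) (p' k) t)
    (hx : ∀ k, HasDerivAt (x k) (x' k) t) (hpos : ∀ k, 0 < p k t)
    (hp' : ∀ k, p' k = -p k t * leftSum p x k t + p k t * rightSum p x k t)
    (hx' : ∀ k, x' k = leftSum p x k t + p k t + rightSum p x k t)
    (hdet : IsUnit (calA p x t).det) (i j : Fin N) :
    HasDerivAt (fun s => triA p x s i j)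
      ((triA p x t * PiMap (calA p x t) - PiMap (calA p x t) * triA p x t) i j) t := by
  have h := hasDerivAt_matrix_inv_apply (hasDerivAt_calA_apply hp hx hpos hp' hx') hdet i j
  rwa [Matrix.neg_nonsing_inv_mul_commutator_mul_nonsing_inv hdet] at h

end Peakon

theorem stmt2_general (N : ℕ) (p x : Fin N → ℝ → ℝ)
    (hpdiff : ∀ i, Differentiable ℝ (p i))
    (hxdiff : ∀ i, Differentiable ℝ (x i))
    (hppos : ∀ i t, 0 < p i t)
    (hpeq : ∀ (i : Fin N) (t : ℝ), deriv (p i) t =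
      -(p i t) * ∑ j ∈ Finset.univ.filter (fun j => j < i),
          p j t * Real.exp (x i t - x j t)
        + p i t * ∑ j ∈ Finset.univ.filter (fun j => i < j),
          p j t * Real.exp (x j t - x i t))
    (hxeq : ∀ (i : Fin N) (t : ℝ), deriv (x i) t =
      (∑ j ∈ Finset.univ.filter (fun j => j < i), p j t * Real.exp (x i t - x j t))
        + p i t
        + ∑ j ∈ Finset.univ.filter (fun j => i < j), p j t * Real.exp (x j t - x i t))
    (hinv : ∀ t : ℝ, IsUnit (calA p x t).det) :
    (∀ (i j : Fin N) (t : ℝ), DifferentiableAt ℝ (fun s => triA p x s i j) t) ∧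
    (∀ (t : ℝ) (i j : Fin N),
      deriv (fun s => triA p x s i j) t
        = (triA p x t * PiMap ((triA p x t)⁻¹) - PiMap ((triA p x t)⁻¹) * triA p x t) i j) := by
  have hA : ∀ i j t, HasDerivAt (fun s => triA p x s i j)
      ((triA p x t * PiMap (calA p x t) - PiMap (calA p x t) * triA p x t) i j) t :=
    fun i j t => hasDerivAt_triA_apply (fun k => (hpdiff k t).hasDerivAt)
      (fun k => (hxdiff k t).hasDerivAt) (fun k => hppos k t) (fun k => hpeq k t)
      (fun k => hxeq k t) (hinv t) i j
  refine ⟨fun i j t => (hA i j t).differentiableAt, fun t i j => ?_⟩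
  rw [(hA i j t).deriv, triA, Matrix.nonsing_inv_nonsing_inv _ (hinv t)]

theorem stmt2 (N : ℕ) (hN : 1 ≤ N) (p x : Fin N → ℝ → ℝ)
    (hpdiff : ∀ i, Differentiable ℝ (p i))
    (hxdiff : ∀ i, Differentiable ℝ (x i))
    (hppos : ∀ i t, 0 < p i t)
    (hxord : ∀ (i j : Fin N), i < j → ∀ t : ℝ, x j t < x i t)
    (hpeq : ∀ (i : Fin N) (t : ℝ), deriv (p i) t =
      -(p i t) * ∑ j ∈ Finset.univ.filter (fun j => j < i),
          p j t * Real.exp (x i t - x j t)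
        + p i t * ∑ j ∈ Finset.univ.filter (fun j => i < j),
          p j t * Real.exp (x j t - x i t))
    (hxeq : ∀ (i : Fin N) (t : ℝ), deriv (x i) t =
      (∑ j ∈ Finset.univ.filter (fun j => j < i), p j t * Real.exp (x i t - x j t))
        + p i t
        + ∑ j ∈ Finset.univ.filter (fun j => i < j), p j t * Real.exp (x j t - x i t))
    (hinv : ∀ t : ℝ, IsUnit (calA p x t).det) :
    (∀ (i j : Fin N) (t : ℝ), DifferentiableAt ℝ (fun s => triA p x s i j) t) ∧
    (∀ (t : ℝ) (i j : Fin N),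
      deriv (fun s => triA p x s i j) t
        = (triA p x t * PiMap ((triA p x t)⁻¹) - PiMap ((triA p x t)⁻¹) * triA p x t) i j) :=
  stmt2_general N p x hpdiff hxdiff hppos hpeq hxeq hinv
end

section
/- Let N ≥ 1 and let (μ_i)_{i≥0} be a real sequence. For s ∈ {0,1,2} define τ_0^{(s)} := 1 and τ_i^{(s)} := det(μ_{j+k+s})_{j,k=0}^{i−1}, and assume τ_i^{(s)} ≠ 0 for all 1 ≤ i ≤ N+1 and s ∈ {0,1,2}. For s ∈ {0,1} set Q_i^{(s)} := τ_{i−1}^{(s)} τ_i^{(s+1)} / (τ_i^{(s)} τ_{i−1}^{(s+1)}) and E_i^{(s)} := τ_{i+1}^{(s)} τ_{i−1}^{(s+1)} / (τ_i^{(s)} τ_i^{(s+1)}), with E_0^{(s)} := 0. Then the discrete Toda identities hold: Q_i^{(1)} + E_{i−1}^{(1)} = Q_i^{(0)} + E_i^{(0)} for i = 1,…,N, and Q_i^{(1)} E_i^{(1)} = Q_{i+1}^{(0)} E_i^{(0)} for i = 1,…,N−1. -/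
/-!
Both identities are rational identities among the Hankel determinants `τ^{(0)}, τ^{(1)}, τ^{(2)}`.
The product identity is pure cancellation. After clearing denominators the sum identity becomes
a combination of two instances of the Desnanot–Jacobi identity
`τ_{m+2}^{(s)} τ_m^{(s+2)} = τ_{m+1}^{(s)} τ_{m+1}^{(s+2)} - (τ_{m+1}^{(s+1)})²`,
which holds because deleting the first and/or last row and column of a Hankel matrix leaves
Hankel matrices of the shifted sequences. Desnanot–Jacobi itself is Jacobi's theorem on the
`2 × 2` corner minor of the adjugate, proved where `det A ≠ 0` and transported to all matrices
through the generic matrix.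
-/

open Finset

/-- Hankel determinant τ_i^{(s)} of the shifted moment sequence (μ_{m+s}). -/
noncomputable def tauS (μ : ℕ → ℝ) (s i : ℕ) : ℝ :=
  Matrix.det (Matrix.of fun j k : Fin i => μ (j.1 + k.1 + s))

/-- Q_i^{(s)} := τ_{i−1}^{(s)} τ_i^{(s+1)} / (τ_i^{(s)} τ_{i−1}^{(s+1)}). -/
noncomputable def Qd (μ : ℕ → ℝ) (s i : ℕ) : ℝ :=
  tauS μ s (i - 1) * tauS μ (s + 1) i / (tauS μ s i * tauS μ (s + 1) (i - 1))

/-- E_i^{(s)} := τ_{i+1}^{(s)} τ_{i−1}^{(s+1)} / (τ_i^{(s)} τ_i^{(s+1)}), with E_0^{(s)} = 0. -/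
noncomputable def Ed (μ : ℕ → ℝ) (s i : ℕ) : ℝ :=
  if i = 0 then 0 else
    tauS μ s (i + 1) * tauS μ (s + 1) (i - 1) / (tauS μ s i * tauS μ (s + 1) i)

def finEndsSumEquiv (n : ℕ) : Fin 2 ⊕ Fin n ≃ Fin (n + 2) where
  toFun := Sum.elim ![0, Fin.last (n + 1)] fun k => k.castSucc.succ
  invFun := Fin.cases (Sum.inl 0) (Fin.lastCases (Sum.inl 1) Sum.inr)
  left_inv := by
    rintro (i | k)
    · fin_cases i <;> simp [← Fin.succ_last]
    · simp
  right_inv := by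
    intro i
    induction i using Fin.cases with
    | zero => simp
    | succ j => induction j using Fin.lastCases <;> simp [← Fin.succ_last]

namespace Matrix

variable {R : Type*} [CommRing R]

theorem det_mul_det_submatrix_inner_eq_adjugate [IsDomain R] {n : ℕ}
    (A : Matrix (Fin (n + 2)) (Fin (n + 2)) R) (hA : A.det ≠ 0) :
    A.det * (A.submatrix (fun k : Fin n => k.castSucc.succ) fun k => k.castSucc.succ).det =
      A.adjugate 0 0 * A.adjugate (Fin.last _) (Fin.last _) -
        A.adjugate 0 (Fin.last _) * A.adjugate (Fin.last _) 0 := by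
  set e := finEndsSumEquiv n
  -- `A * B` is block triangular with diagonal blocks `det A • 1` and the inner minor of `A`,
  -- while `det B` is the corner minor of `adj A`.
  set B := ((1 : Matrix (Fin (n + 2)) (Fin (n + 2)) R).updateCol 0 (A.adjugate.col 0)).updateCol
    (Fin.last (n + 1)) (A.adjugate.col (Fin.last _))
  have hcol : ∀ j, A *ᵥ A.adjugate.col j = Pi.single j A.det := by
    intro j
    ext i
    simp [mulVec, dotProduct, ← mul_apply, mul_adjugate, one_apply, Pi.single_apply]
  have hAB : (A * B).submatrix e e = fromBlocks (diagonal fun _ => A.det)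
      ((A * B).submatrix e e).toBlocks₁₂ 0
      (A.submatrix (fun k : Fin n => k.castSucc.succ) fun k => k.castSucc.succ) := by
    simp only [B, mul_updateCol, mul_one, hcol]
    ext (i | i) (k | k)
    · fin_cases i <;> fin_cases k <;> simp [e, finEndsSumEquiv]
    · rfl
    · fin_cases k <;> simp [e, finEndsSumEquiv]
    · simp [e, finEndsSumEquiv]
  have hlast (k : Fin n) : Fin.last (n + 1) ≠ k.castSucc.succ := by
    simp only [ne_eq, Fin.ext_iff, Fin.val_last, Fin.val_succ, Fin.val_castSucc]; omega
  have hB : B.submatrix e e = fromBlocks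
      !![A.adjugate 0 0, A.adjugate 0 (Fin.last _);
        A.adjugate (Fin.last _) 0, A.adjugate (Fin.last _) (Fin.last _)]
      0 (B.submatrix e e).toBlocks₂₁ 1 := by
    ext (i | i) (k | k)
    · fin_cases i <;> fin_cases k <;> simp [B, e, finEndsSumEquiv]
    · fin_cases i <;> simp [B, e, finEndsSumEquiv, (Fin.succ_ne_zero _).symm, hlast]
    · rfl
    · simp [B, e, finEndsSumEquiv, one_apply]
  have hdet := det_mul A B
  rw [← det_submatrix_equiv_self e (A * B), ← det_submatrix_equiv_self e B, hAB, hB,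
    det_fromBlocks_zero₂₁, det_fromBlocks_zero₁₂, det_diagonal, det_fin_two_of] at hdet
  simp only [Finset.prod_const, Finset.card_univ, Fintype.card_fin, det_one, mul_one] at hdet
  exact mul_left_cancel₀ hA (by linear_combination hdet)

theorem desnanot_jacobi_of_det_ne_zero [IsDomain R] {n : ℕ}
    (A : Matrix (Fin (n + 2)) (Fin (n + 2)) R) (hA : A.det ≠ 0) :
    A.det * (A.submatrix (fun k : Fin n => k.castSucc.succ) fun k => k.castSucc.succ).det =
      (A.submatrix Fin.succ Fin.succ).det * (A.submatrix Fin.castSucc Fin.castSucc).det -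
        (A.submatrix Fin.succ Fin.castSucc).det * (A.submatrix Fin.castSucc Fin.succ).det := by
  rw [det_mul_det_submatrix_inner_eq_adjugate A hA]
  simp only [adjugate_fin_succ_eq_det_submatrix, Fin.succAbove_zero, Fin.succAbove_last,
    Fin.val_zero, Fin.val_last, add_zero, zero_add, pow_zero, one_mul]
  rw [pow_add]
  rcases neg_one_pow_eq_or R (n + 1) with h | h <;> rw [h] <;> ring

theorem desnanot_jacobi {n : ℕ} (A : Matrix (Fin (n + 2)) (Fin (n + 2)) R) :
    A.det * (A.submatrix (fun k : Fin n => k.castSucc.succ) fun k => k.castSucc.succ).det =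
      (A.submatrix Fin.succ Fin.succ).det * (A.submatrix Fin.castSucc Fin.castSucc).det -
        (A.submatrix Fin.succ Fin.castSucc).det * (A.submatrix Fin.castSucc Fin.succ).det := by
  -- The generic matrix over `ℤ[X_ij]` has nonzero determinant, and `A` is a specialisation of it.
  have h := desnanot_jacobi_of_det_ne_zero _ (det_mvPolynomialX_ne_zero (Fin (n + 2)) ℤ)
  rw [← mvPolynomialX_mapMatrix_aeval ℤ A]
  simpa only [map_sub, map_mul, AlgHom.map_det, AlgHom.mapMatrix_apply, submatrix_map] using
    congrArg (MvPolynomial.aeval fun p : Fin (n + 2) × Fin (n + 2) => A p.1 p.2) h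

end Matrix

theorem tauS_zero (μ : ℕ → ℝ) (s : ℕ) : tauS μ s 0 = 1 :=
  Matrix.det_isEmpty

theorem det_submatrix_hankel (μ : ℕ → ℝ) {m i : ℕ} (s t : ℕ) (r c : Fin i → Fin m)
    (hrc : ∀ j k, (r j : ℕ) + c k = j + k + t) :
    ((Matrix.of fun j k : Fin m => μ (j.1 + k.1 + s)).submatrix r c).det = tauS μ (s + t) i := by
  unfold tauS
  congr 1
  ext j k
  simp only [Matrix.submatrix_apply, Matrix.of_apply, hrc]
  ring_nf

theorem tauS_desnanot_jacobi (μ : ℕ → ℝ) (s m : ℕ) :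
    tauS μ s (m + 2) * tauS μ (s + 2) m =
      tauS μ s (m + 1) * tauS μ (s + 2) (m + 1) - tauS μ (s + 1) (m + 1) ^ 2 := by
  have h : tauS μ s (m + 2) * _ = _ :=
    (Matrix.of fun j k : Fin (m + 2) => μ (j.1 + k.1 + s)).desnanot_jacobi
  rw [det_submatrix_hankel μ s 2, det_submatrix_hankel μ s 2, det_submatrix_hankel μ s 0,
    det_submatrix_hankel μ s 1, det_submatrix_hankel μ s 1, add_zero] at h
  · linear_combination h
  all_goals intro j k; simp only [Fin.val_succ, Fin.val_castSucc]; omega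

theorem Qd_succ (μ : ℕ → ℝ) (s i : ℕ) :
    Qd μ s (i + 1) =
      tauS μ s i * tauS μ (s + 1) (i + 1) / (tauS μ s (i + 1) * tauS μ (s + 1) i) :=
  rfl

@[simp]
theorem Ed_zero (μ : ℕ → ℝ) (s : ℕ) : Ed μ s 0 = 0 :=
  rfl

theorem Ed_succ (μ : ℕ → ℝ) (s i : ℕ) :
    Ed μ s (i + 1) =
      tauS μ s (i + 2) * tauS μ (s + 1) i / (tauS μ s (i + 1) * tauS μ (s + 1) (i + 1)) :=
  rfl

theorem Qd_one_succ_add_Ed_one (μ : ℕ → ℝ) (i : ℕ) (ha : tauS μ 0 (i + 1) ≠ 0)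
    (hb : tauS μ 1 (i + 1) ≠ 0) (hb' : tauS μ 1 i ≠ 0) (hc : tauS μ 2 i ≠ 0) :
    Qd μ 1 (i + 1) + Ed μ 1 i = Qd μ 0 (i + 1) + Ed μ 0 (i + 1) := by
  cases i with
  | zero =>
    have h := tauS_desnanot_jacobi μ 0 0
    simp only [Qd_succ, Ed_succ, Ed_zero, tauS_zero, Nat.reduceAdd] at h ⊢
    field_simp
    linear_combination -h
  | succ k =>
    have h₁ := tauS_desnanot_jacobi μ 0 k
    have h₂ := tauS_desnanot_jacobi μ 0 (k + 1)
    simp only [Qd_succ, Ed_succ, add_assoc, Nat.reduceAdd] at h₁ h₂ hb ha ⊢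
    field_simp
    linear_combination tauS μ 1 (k + 2) ^ 2 * h₁ - tauS μ 1 (k + 1) ^ 2 * h₂

theorem Qd_one_mul_Ed_one (μ : ℕ → ℝ) (i : ℕ) (ha : tauS μ 0 (i + 1) ≠ 0)
    (ha' : tauS μ 0 (i + 2) ≠ 0) (hb : tauS μ 1 (i + 1) ≠ 0) (hc : tauS μ 2 i ≠ 0)
    (hc' : tauS μ 2 (i + 1) ≠ 0) :
    Qd μ 1 (i + 1) * Ed μ 1 (i + 1) = Qd μ 0 (i + 2) * Ed μ 0 (i + 1) := by
  simp only [Qd_succ, Ed_succ, add_assoc, Nat.reduceAdd]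
  field_simp

theorem stmt6_general (N : ℕ) (μ : ℕ → ℝ)
    (hτ : ∀ s, s ≤ 2 → ∀ i, 1 ≤ i → i ≤ N + 1 → tauS μ s i ≠ 0) :
    (∀ i, 1 ≤ i → i ≤ N → Qd μ 1 i + Ed μ 1 (i - 1) = Qd μ 0 i + Ed μ 0 i) ∧
    (∀ i, 1 ≤ i → i ≤ N - 1 → Qd μ 1 i * Ed μ 1 i = Qd μ 0 (i + 1) * Ed μ 0 i) := by
  have hτ' : ∀ s ≤ 2, ∀ i ≤ N + 1, tauS μ s i ≠ 0 := by
    rintro s hs (_ | i) hi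
    · simp [tauS_zero]
    · exact hτ s hs _ (by omega) hi
  refine ⟨fun i hi hiN => ?_, fun i hi hiN => ?_⟩ <;>
    obtain ⟨k, rfl⟩ := Nat.exists_eq_add_of_le' hi
  · refine Qd_one_succ_add_Ed_one μ k (hτ' 0 ?_ _ ?_) (hτ' 1 ?_ _ ?_) (hτ' 1 ?_ _ ?_)
      (hτ' 2 ?_ _ ?_) <;> omega
  · refine Qd_one_mul_Ed_one μ k (hτ' 0 ?_ _ ?_) (hτ' 0 ?_ _ ?_) (hτ' 1 ?_ _ ?_)
      (hτ' 2 ?_ _ ?_) (hτ' 2 ?_ _ ?_) <;> omega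

theorem stmt6 (N : ℕ) (hN : 1 ≤ N) (μ : ℕ → ℝ)
    (hτ : ∀ s, s ≤ 2 → ∀ i, 1 ≤ i → i ≤ N + 1 → tauS μ s i ≠ 0) :
    (∀ i, 1 ≤ i → i ≤ N → Qd μ 1 i + Ed μ 1 (i - 1) = Qd μ 0 i + Ed μ 0 i) ∧
    (∀ i, 1 ≤ i → i ≤ N - 1 → Qd μ 1 i * Ed μ 1 i = Qd μ 0 (i + 1) * Ed μ 0 i) :=
  stmt6_general N μ hτ
end
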